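/- Let F_r be an r-region forest plan of G with r > 1, set ξ_r = ξ(F_r), and assume W(ξ_r) > 0. Then Σ_{F_{r-1} ∈ A₁(F_r)} γ̃(F_{r-1}) · M(F_r | F_{r-1}) = γ(ξ_r) · Σ_{{T_k, T_{k'}} adjacent in F_r} (∏_{G_n} τ(G_n))^{-1} · (W(ξ̃_{r-1})/W(ξ_r)) · τ(G[V(T_k) ∪ V(T_{k'})])^{ρ−1} / (τ(G[V(T_k)])^ρ · τ(G[V(T_{k'})])^ρ) · φ(G[V(T_k) ∪ V(T_{k'})] | ξ̃_{r-1}) · EffB(T_k, T_{k'}), where for each adjacent pair the plan ξ̃_{r-1} is obtained from ξ_r by replacing the blocks V(T_k) and V(T_{k'}) with V(T_k) ∪ V(T_{k'}), and the product ∏_{G_n} τ(G_n) ranges over the regions G_n of ξ_r other than G[V(T_k)] and G[V(T_{k'})]. -/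

import Mathlib

open SimpleGraph

namespace Redist

variable {V : Type*} [Fintype V] [DecidableEq V]

/-- The subgraph of `G` induced by the vertex set `s` (the graph `G[s]`). -/
abbrev ind (G : SimpleGraph V) (s : Set V) : G.Subgraph :=
  (⊤ : G.Subgraph).induce s

/-- `T` is a spanning tree of the subgraph `H` of `G`. -/
def IsSpanningTreeOf (G : SimpleGraph V) (T H : G.Subgraph) : Prop :=
  T ≤ H ∧ T.verts = H.verts ∧ T.coe.IsTree

/-- `τ H`: the number of spanning trees of the subgraph `H`. -/
noncomputable def tau (G : SimpleGraph V) (H : G.Subgraph) : ℕ :=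
  {T : G.Subgraph | IsSpanningTreeOf G T H}.ncard

/-- `C(s, t)`: the set of edges of `G` with one endpoint in `s` and the other in `t`. -/
def crossEdges (G : SimpleGraph V) (s t : Set V) : Set (Sym2 V) :=
  {e | e ∈ G.edgeSet ∧ ∃ u v : V, e = s(u, v) ∧ u ∈ s ∧ v ∈ t}

/-- The subgraph obtained from `H` by adding the edges in `E'` (that are edges of `G`). -/
def withEdges (G : SimpleGraph V) (H : G.Subgraph) (E' : Set (Sym2 V)) : G.Subgraph where
  verts := H.verts ∪ {v | ∃ e ∈ E' ∩ G.edgeSet, v ∈ e}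
  Adj u v := H.Adj u v ∨ (s(u, v) ∈ E' ∧ G.Adj u v)
  adj_sub := by
    rintro u v (h | ⟨-, h⟩)
    · exact H.adj_sub h
    · exact h
  edge_vert := by
    rintro u v (h | ⟨h, hG⟩)
    · exact Or.inl (H.edge_vert h)
    · exact Or.inr ⟨s(u, v), ⟨h, hG⟩, Sym2.mem_mk_left u v⟩
  symm := by
    constructor
    rintro u v (h | ⟨h, hG⟩)
    · exact Or.inl (H.symm.symm _ _ h)
    · exact Or.inr ⟨by rwa [Sym2.eq_swap], hG.symm⟩

/-- A plan with `r` regions: a partition of the vertex set into `r` nonempty blocks,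
each inducing a connected subgraph. -/
structure Plan (G : SimpleGraph V) (r : ℕ) where
  blocks : Set (Set V)
  ncard_blocks : blocks.ncard = r
  blocks_nonempty : ∀ B ∈ blocks, B.Nonempty
  blocks_disjoint : ∀ B ∈ blocks, ∀ B' ∈ blocks, B ≠ B' → Disjoint B B'
  blocks_cover : ∀ v : V, ∃ B ∈ blocks, v ∈ B
  blocks_connected : ∀ B ∈ blocks, (ind G B).Connected

/-- `ξp` is a 1-region ancestor of `ξr`: exactly one region of `ξp` is not a region of `ξr`. -/
def IsAncestor (G : SimpleGraph V) {r : ℕ} (ξp : Plan G (r - 1)) (ξr : Plan G r) : Prop :=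
  (ξp.blocks \ ξr.blocks).ncard = 1

/-- An `r`-region forest plan: `r` vertex-disjoint trees covering all of `V`. -/
structure ForestPlan (G : SimpleGraph V) (r : ℕ) where
  trees : Set G.Subgraph
  ncard_trees : trees.ncard = r
  isTree : ∀ T ∈ trees, T.coe.IsTree
  trees_disjoint : ∀ T ∈ trees, ∀ T' ∈ trees, T ≠ T' → Disjoint T.verts T'.verts
  trees_cover : ∀ v : V, ∃ T ∈ trees, v ∈ T.verts

/-- The induced plan of a forest plan (as a family of blocks). -/
def forestBlocks (G : SimpleGraph V) {r : ℕ} (F : ForestPlan G r) : Set (Set V) :=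
  Subgraph.verts '' F.trees

/-- `Fp` is a 1-region tree ancestor of `Fr`. -/
def ForestAncestor (G : SimpleGraph V) {r : ℕ} (Fp : ForestPlan G (r - 1))
    (Fr : ForestPlan G r) : Prop :=
  (Fp.trees \ Fr.trees).ncard = 1

variable {A : Type*}

/-- The set of administrative units meeting the vertex set `s`. -/
def unitSet (η : V → A) (s : Set V) : Set A := {a | (s ∩ η ⁻¹' {a}).Nonempty}

/-- A block is hierarchically connected: its intersection with each administrative unit has
at most one connected component. -/
def HierConnectedBlock (G : SimpleGraph V) (η : V → A) (B : Set V) : Prop :=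
  ∀ a : A, (ind G (B ∩ η ⁻¹' {a})).coe.Preconnected

/-- `T` is an `η`-hierarchical tree on the region induced by `B`. -/
def IsHierTree (G : SimpleGraph V) (η : V → A) (T : G.Subgraph) (B : Set V) : Prop :=
  IsSpanningTreeOf G T (ind G B) ∧
    ∀ a : A, (B ∩ η ⁻¹' {a}).Nonempty →
      IsSpanningTreeOf G (T.induce (B ∩ η ⁻¹' {a})) (ind G (B ∩ η ⁻¹' {a}))

/-- Two blocks are administratively adjacent. -/
def AdminAdj (G : SimpleGraph V) (η : V → A) (B B' : Set V) : Prop :=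
  ∃ a : A, ∃ u v : V, G.Adj u v ∧ u ∈ B ∩ η ⁻¹' {a} ∧ v ∈ B' ∩ η ⁻¹' {a}

/-- `S` is (the set of regions of) a connected component of the administrative adjacency
graph of the plan with blocks `blocks`. -/
def IsAdminComponent (G : SimpleGraph V) (η : V → A) (blocks S : Set (Set V)) : Prop :=
  S ⊆ blocks ∧ S.Nonempty ∧
    (∀ B ∈ S, ∀ B' ∈ S,
      Relation.ReflTransGen (fun X Y => X ∈ S ∧ Y ∈ S ∧ AdminAdj G η X Y) B B') ∧
    ∀ B ∈ S, ∀ B' ∈ blocks, B' ∉ S → ¬AdminAdj G η B B'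

/-- The number of connected components of the subgraph induced by `s`. -/
noncomputable def numComponents (G : SimpleGraph V) (s : Set V) : ℕ :=
  Nat.card ((ind G s).coe.ConnectedComponent)

/-- The number of administrative splits of a family `S` of blocks. -/
noncomputable def splits [Fintype A] (G : SimpleGraph V) (η : V → A) (S : Set (Set V)) : ℕ :=
  (∑ᶠ a : A, ∑ᶠ B ∈ S, numComponents G (B ∩ η ⁻¹' {a})) -
    {a : A | ∃ B ∈ S, (B ∩ η ⁻¹' {a}).Nonempty}.ncard

/-- `T` is a hierarchical plan tree for the plan with blocks `blocks`. -/
def IsHierPlanTree (G : SimpleGraph V) (η : V → A) (T : G.Subgraph)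
    (blocks : Set (Set V)) : Prop :=
  IsHierTree G η T Set.univ ∧ ∀ B ∈ blocks, IsHierTree G η (T.induce B) B

/-- The plan with blocks `blocks` is hierarchical. -/
def IsHierPlanBlocks (G : SimpleGraph V) (η : V → A) (blocks : Set (Set V)) : Prop :=
  ∃ T : G.Subgraph, IsHierPlanTree G η T blocks

/-- The effective region tree boundary length between two vertex-disjoint trees. -/
noncomputable def EffB (G : SimpleGraph V) (p : G.Subgraph → Sym2 V → ℝ)
    (Tk Tk' : G.Subgraph) : ℝ :=
  ∑ᶠ e ∈ crossEdges G Tk.verts Tk'.verts, p (withEdges G (Tk ⊔ Tk') {e}) e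

/-! Every 1-region tree ancestor of `Fr` arises by choosing two trees `Tk`, `Tk'` of `Fr` and
replacing them by a spanning tree of `G[V(Tk) ∪ V(Tk')]`, and the union region is connected
exactly when `Tk` and `Tk'` are adjacent. The summand `γ̃(Fp) · M(Fr | Fp)` only depends on the
merged pair, so each adjacent pair contributes `τ(G[V(Tk) ∪ V(Tk')])` equal summands; comparing
the products over the regions of the two plans then gives the pair's term on the right. -/

lemma finsum_mem_const {α M : Type*} [AddCommMonoid M] {s : Set α} (hs : s.Finite) (c : M) :
    ∑ᶠ _ ∈ s, c = s.ncard • c := by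
  rw [← hs.coe_toFinset, finsum_mem_coe_finset, Finset.sum_const, Set.ncard_coe_finset]

section SpanningTrees

variable {G : SimpleGraph V}

lemma isSpanningTreeOf_ind_verts {T : G.Subgraph} (hT : T.coe.IsTree) :
    IsSpanningTreeOf G T (ind G T.verts) :=
  ⟨Subgraph.le_induce_top_verts, rfl, hT⟩

def subgraphOfLECoe (H : G.Subgraph) (T : SimpleGraph H.verts) (hle : T ≤ H.coe) :
    G.Subgraph where
  verts := H.verts
  Adj a b := ∃ (ha : a ∈ H.verts) (hb : b ∈ H.verts), T.Adj ⟨a, ha⟩ ⟨b, hb⟩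
  adj_sub := fun ⟨_, _, h⟩ => H.adj_sub (hle h)
  edge_vert := fun ⟨ha, _, _⟩ => ha
  symm := ⟨fun _ _ ⟨ha, hb, h⟩ => ⟨hb, ha, h.symm⟩⟩

lemma coe_subgraphOfLECoe (H : G.Subgraph) (T : SimpleGraph H.verts) (hle : T ≤ H.coe) :
    (subgraphOfLECoe H T hle).coe = T := by
  ext ⟨a, ha⟩ ⟨b, hb⟩
  exact ⟨fun ⟨_, _, h⟩ => h, fun h => ⟨ha, hb, h⟩⟩

lemma exists_isSpanningTreeOf {H : G.Subgraph} (hH : H.Connected) :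
    ∃ T, IsSpanningTreeOf G T H := by
  obtain ⟨T, hle, hT⟩ := hH.coe.exists_isTree_le
  refine ⟨subgraphOfLECoe H T hle, ⟨fun _ h => h, fun _ _ ⟨_, _, h⟩ => hle h⟩, rfl, ?_⟩
  rwa [coe_subgraphOfLECoe]

lemma tau_pos {H : G.Subgraph} (hH : H.Connected) : 0 < tau G H :=
  (Set.ncard_pos (Set.toFinite _)).mpr (exists_isSpanningTreeOf hH)

lemma connected_ind_union {T T' : G.Subgraph} (hT : T.Connected) (hT' : T'.Connected)
    {u v : V} (hu : u ∈ T.verts) (hv : v ∈ T'.verts) (huv : G.Adj u v) :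
    (ind G (T.verts ∪ T'.verts)).Connected := by
  have hbridge : (T ⊔ G.subgraphOfAdj huv).Connected :=
    Subgraph.connected_sup hT.preconnected (Subgraph.subgraphOfAdj_connected huv).preconnected
      ⟨u, hu, by simp⟩
  have hall : (T ⊔ G.subgraphOfAdj huv ⊔ T').Connected :=
    Subgraph.connected_sup hbridge.preconnected hT'.preconnected ⟨v, Or.inr (by simp), hv⟩
  have hverts : (T ⊔ G.subgraphOfAdj huv ⊔ T').verts = T.verts ∪ T'.verts := by
    ext x
    simp only [Subgraph.verts_sup, subgraphOfAdj_verts, Set.mem_union, Set.mem_insert_iff,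
      Set.mem_singleton_iff]
    constructor
    · rintro ((h | rfl | rfl) | h) <;> tauto
    · tauto
  exact hall.mono (hverts ▸ Subgraph.le_induce_top_verts) hverts

lemma crossEdges_nonempty {H : G.Subgraph} (hH : H.Connected) {s t : Set V}
    (hverts : H.verts = s ∪ t) (hs : s.Nonempty) (ht : t.Nonempty) (hst : Disjoint s t) :
    (crossEdges G s t).Nonempty := by
  obtain ⟨u, hu⟩ := hs
  obtain ⟨v, hv⟩ := ht
  have huH : u ∈ H.verts := hverts ▸ Or.inl hu
  have hvH : v ∈ H.verts := hverts ▸ Or.inr hv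
  obtain ⟨w⟩ := hH.coe.preconnected ⟨u, huH⟩ ⟨v, hvH⟩
  obtain ⟨d, -, hfst, hsnd⟩ :=
    w.exists_boundary_dart {x : H.verts | ↑x ∈ s} (by exact hu) (hst.notMem_of_mem_right hv)
  have hsnd_t : (d.snd : V) ∈ t := (hverts ▸ d.snd.2 : (d.snd : V) ∈ s ∪ t).resolve_left hsnd
  exact ⟨s(d.fst, d.snd), H.adj_sub d.adj, d.fst, d.snd, rfl, hfst, hsnd_t⟩

end SpanningTrees

section ForestPlans

variable {G : SimpleGraph V} {r : ℕ}

lemma ForestPlan.trees_injective :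
    Function.Injective (ForestPlan.trees : ForestPlan G r → Set G.Subgraph) := by
  rintro ⟨⟩ ⟨⟩ h
  simpa using h

instance : Finite (ForestPlan G r) := .of_injective _ ForestPlan.trees_injective

namespace ForestPlan

variable (F : ForestPlan G r)

lemma connected {T : G.Subgraph} (hT : T ∈ F.trees) : T.Connected :=
  Subgraph.connected_iff'.mpr (F.isTree T hT).connected

lemma verts_nonempty {T : G.Subgraph} (hT : T ∈ F.trees) : T.verts.Nonempty :=
  (F.connected hT).nonempty

lemma eq_of_mem_verts {T T' : G.Subgraph} (hT : T ∈ F.trees) (hT' : T' ∈ F.trees) {x : V}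
    (hx : x ∈ T.verts) (hx' : x ∈ T'.verts) : T = T' := by
  by_contra hne
  exact (F.trees_disjoint T hT T' hT' hne).notMem_of_mem_left hx hx'

lemma verts_injOn : Set.InjOn Subgraph.verts F.trees := fun _ hT _ hT' h =>
  have ⟨_, hx⟩ := F.verts_nonempty hT
  F.eq_of_mem_verts hT hT' hx (h ▸ hx)

lemma finprod_trees_verts {M : Type*} [CommMonoid M] (f : Set V → M) :
    ∏ᶠ T ∈ F.trees, f T.verts = ∏ᶠ B ∈ forestBlocks G F, f B :=
  (finprod_mem_image F.verts_injOn).symm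

variable {F}

lemma verts_ne_union {Tk Tk' T : G.Subgraph} (hk : Tk ∈ F.trees) (hk' : Tk' ∈ F.trees)
    (hne : Tk ≠ Tk') (hT : T ∈ F.trees) : T.verts ≠ Tk.verts ∪ Tk'.verts := by
  intro h
  obtain ⟨x, hx⟩ := F.verts_nonempty hk
  obtain ⟨y, hy⟩ := F.verts_nonempty hk'
  exact hne <| (F.eq_of_mem_verts hT hk (h ▸ Or.inl hx) hx).symm.trans
    (F.eq_of_mem_verts hT hk' (h ▸ Or.inr hy) hy)

end ForestPlan

end ForestPlans

section Ancestors

variable {G : SimpleGraph V} {r : ℕ}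

def ancestorsMerging (Fr : ForestPlan G r) (P : Set G.Subgraph) : Set (ForestPlan G (r - 1)) :=
  {Fp | ForestAncestor G Fp Fr ∧ Fr.trees \ Fp.trees = P}

def adjacentPairs (F : ForestPlan G r) : Set (Set G.Subgraph) :=
  {P | ∃ Tk ∈ F.trees, ∃ Tk' ∈ F.trees,
    Tk ≠ Tk' ∧ (crossEdges G Tk.verts Tk'.verts).Nonempty ∧ P = {Tk, Tk'}}

lemma pairwiseDisjoint_ancestorsMerging (Fr : ForestPlan G r) (S : Set (Set G.Subgraph)) :
    S.PairwiseDisjoint (ancestorsMerging Fr) := fun _ _ _ _ hPQ =>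
  Set.disjoint_left.mpr fun _ hP hQ => hPQ (hP.2.symm.trans hQ.2)

lemma ForestPlan.verts_eq_biUnion_sdiff {r' : ℕ} (F : ForestPlan G r) (F' : ForestPlan G r')
    {T : G.Subgraph} (h : F'.trees \ F.trees = {T}) :
    T.verts = ⋃ S ∈ F.trees \ F'.trees, S.verts := by
  have hT : T ∈ F'.trees \ F.trees := h ▸ rfl
  ext x
  simp only [Set.mem_iUnion, exists_prop]
  constructor
  · intro hx
    obtain ⟨S, hS, hxS⟩ := F.trees_cover x
    refine ⟨S, ⟨hS, fun hS' => hT.2 ?_⟩, hxS⟩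
    exact F'.eq_of_mem_verts hT.1 hS' hx hxS ▸ hS
  · rintro ⟨S, hS, hxS⟩
    obtain ⟨S', hS', hxS'⟩ := F'.trees_cover x
    have hS'F : S' ∉ F.trees := fun hS'F => hS.2 (F.eq_of_mem_verts hS'F hS.1 hxS' hxS ▸ hS')
    have hS'T : S' ∈ F'.trees \ F.trees := ⟨hS', hS'F⟩
    rw [h, Set.mem_singleton_iff] at hS'T
    exact hS'T ▸ hxS'

lemma ForestPlan.trees_eq_insert_of_sdiff {r' : ℕ} {F : ForestPlan G r} {F' : ForestPlan G r'}
    {P : Set G.Subgraph} {T : G.Subgraph} (hP : F.trees \ F'.trees = P)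
    (hT : F'.trees \ F.trees = {T}) : F'.trees = insert T (F.trees \ P) := by
  rw [← hP, Set.sdiff_sdiff_right_self, Set.insert_eq, ← hT, Set.inter_comm, Set.sdiff_union_inter]

variable {Fr : ForestPlan G r} {Fp : ForestPlan G (r - 1)}

lemma ForestAncestor.ncard_sdiff (hr : r ≠ 0) (h : ForestAncestor G Fp Fr) :
    (Fr.trees \ Fp.trees).ncard = 2 := by
  have h₀ : (Fp.trees \ Fr.trees).ncard = 1 := h
  have h₁ := Set.ncard_sdiff_add_ncard Fr.trees Fp.trees
  have h₂ := Set.ncard_sdiff_add_ncard Fp.trees Fr.trees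
  rw [Set.union_comm, Fr.ncard_trees] at h₂
  rw [Fp.ncard_trees] at h₁
  omega

lemma ForestAncestor.exists_oldTree {Tk Tk' : G.Subgraph} (h : ForestAncestor G Fp Fr)
    (hpair : Fr.trees \ Fp.trees = {Tk, Tk'}) :
    ∃ Tl, Fp.trees \ Fr.trees = {Tl} ∧ Tl.verts = Tk.verts ∪ Tk'.verts := by
  obtain ⟨Tl, hTl⟩ := Set.ncard_eq_one.mp h
  exact ⟨Tl, hTl, by rw [Fr.verts_eq_biUnion_sdiff Fp hTl, hpair, Set.biUnion_pair]⟩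

lemma setOf_forestAncestor_eq_biUnion (hr : r ≠ 0) (Fr : ForestPlan G r) :
    {Fp : ForestPlan G (r - 1) | ForestAncestor G Fp Fr} =
      ⋃ P ∈ adjacentPairs Fr, ancestorsMerging Fr P := by
  ext Fp
  simp only [Set.mem_ofPred_eq, Set.mem_iUnion, exists_prop]
  refine ⟨fun h => ?_, fun ⟨_, _, hFp⟩ => hFp.1⟩
  obtain ⟨Tk, Tk', hne, hpair⟩ := Set.ncard_eq_two.mp (h.ncard_sdiff hr)
  have hk : Tk ∈ Fr.trees \ Fp.trees := hpair ▸ Set.mem_insert _ _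
  have hk' : Tk' ∈ Fr.trees \ Fp.trees := hpair ▸ Set.mem_insert_of_mem _ rfl
  obtain ⟨Tl, hTl, hverts⟩ := h.exists_oldTree hpair
  have hTlFp : Tl ∈ Fp.trees \ Fr.trees := hTl ▸ rfl
  have hcross := crossEdges_nonempty (Fp.connected hTlFp.1) hverts (Fr.verts_nonempty hk.1)
    (Fr.verts_nonempty hk'.1) (Fr.trees_disjoint Tk hk.1 Tk' hk'.1 hne)
  exact ⟨{Tk, Tk'}, ⟨Tk, hk.1, Tk', hk'.1, hne, hcross, rfl⟩, h, hpair⟩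

def ForestPlan.merge (F : ForestPlan G r) {Tk Tk' Tl : G.Subgraph} (hk : Tk ∈ F.trees)
    (hk' : Tk' ∈ F.trees) (hne : Tk ≠ Tk') (hTl : Tl.coe.IsTree)
    (hverts : Tl.verts = Tk.verts ∪ Tk'.verts) : ForestPlan G (r - 1) where
  trees := insert Tl (F.trees \ {Tk, Tk'})
  ncard_trees := by
    have hcard := Set.ncard_sdiff_add_ncard_of_subset (Set.pair_subset hk hk')
    rw [Set.ncard_pair hne, F.ncard_trees] at hcard
    rw [Set.ncard_insert_of_notMem fun h => F.verts_ne_union hk hk' hne h.1 hverts]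
    omega
  isTree := by
    rintro T (rfl | hT)
    exacts [hTl, F.isTree T hT.1]
  trees_disjoint := by
    have hdisj : ∀ T ∈ F.trees \ {Tk, Tk'}, Disjoint T.verts Tl.verts := fun T hT => by
      rw [hverts, Set.disjoint_union_right]
      exact ⟨F.trees_disjoint _ hT.1 _ hk fun h => hT.2 (Or.inl h),
        F.trees_disjoint _ hT.1 _ hk' fun h => hT.2 (Or.inr h)⟩
    rintro T (rfl | hT) T' (rfl | hT') hTT'
    · exact absurd rfl hTT'
    · exact (hdisj T' hT').symm
    · exact hdisj T hT
    · exact F.trees_disjoint T hT.1 T' hT'.1 hTT'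
  trees_cover v := by
    obtain ⟨T, hT, hv⟩ := F.trees_cover v
    by_cases hpair : T ∈ ({Tk, Tk'} : Set G.Subgraph)
    · refine ⟨Tl, Or.inl rfl, hverts ▸ ?_⟩
      rcases hpair with rfl | rfl
      exacts [Or.inl hv, Or.inr hv]
    · exact ⟨T, Or.inr ⟨hT, hpair⟩, hv⟩

lemma ForestPlan.merge_mem_ancestorsMerging (F : ForestPlan G r) {Tk Tk' Tl : G.Subgraph}
    (hk : Tk ∈ F.trees) (hk' : Tk' ∈ F.trees) (hne : Tk ≠ Tk') (hTl : Tl.coe.IsTree)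
    (hverts : Tl.verts = Tk.verts ∪ Tk'.verts) :
    F.merge hk hk' hne hTl hverts ∈ ancestorsMerging F {Tk, Tk'} := by
  have hTlF : Tl ∉ F.trees := fun h => F.verts_ne_union hk hk' hne h hverts
  have hpair := Set.pair_subset hk hk'
  refine ⟨?_, ?_⟩
  · show (insert Tl (F.trees \ {Tk, Tk'}) \ F.trees).ncard = 1
    rw [Set.ncard_eq_one]
    exact ⟨Tl, Set.ext fun T => by by_cases hT : T = Tl <;> simp_all⟩
  · show F.trees \ insert Tl (F.trees \ {Tk, Tk'}) = {Tk, Tk'}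
    rw [Set.sdiff_insert_of_notMem hTlF, Set.sdiff_sdiff_cancel_left hpair]

lemma ncard_ancestorsMerging (Fr : ForestPlan G r) {Tk Tk' : G.Subgraph} (hk : Tk ∈ Fr.trees)
    (hk' : Tk' ∈ Fr.trees) (hne : Tk ≠ Tk') :
    (ancestorsMerging Fr {Tk, Tk'}).ncard = tau G (ind G (Tk.verts ∪ Tk'.verts)) := by
  refine (Set.ncard_congr (fun Tl hTl => Fr.merge hk hk' hne hTl.2.2 hTl.2.1)
    (fun _ hTl => Fr.merge_mem_ancestorsMerging hk hk' hne hTl.2.2 hTl.2.1) ?_ ?_).symm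
  · intro Tl Tl' hTl hTl' heq
    have htrees : insert Tl (Fr.trees \ {Tk, Tk'}) = insert Tl' (Fr.trees \ {Tk, Tk'}) :=
      congrArg ForestPlan.trees heq
    have hmem : Tl ∈ insert Tl' (Fr.trees \ {Tk, Tk'}) := htrees ▸ Set.mem_insert _ _
    exact hmem.resolve_right fun h => Fr.verts_ne_union hk hk' hne h.1 hTl.2.1
  · intro Fp hFp
    obtain ⟨Tl, hTl, hverts⟩ := hFp.1.exists_oldTree hFp.2
    have hTlFp : Tl ∈ Fp.trees \ Fr.trees := hTl ▸ rfl
    have hspan := isSpanningTreeOf_ind_verts (Fp.isTree Tl hTlFp.1)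
    rw [hverts] at hspan
    exact ⟨Tl, hspan, ForestPlan.trees_injective
      (ForestPlan.trees_eq_insert_of_sdiff hFp.2 hTl).symm⟩

/-- The plan `ξ̃_{r-1}` of the statement. -/
def mergedBlocks (F : ForestPlan G r) (Tk Tk' : G.Subgraph) : Set (Set V) :=
  (forestBlocks G F \ {Tk.verts, Tk'.verts}) ∪ {Tk.verts ∪ Tk'.verts}

lemma forestBlocks_of_mem_ancestorsMerging {Tk Tk' : G.Subgraph}
    (hFp : Fp ∈ ancestorsMerging Fr {Tk, Tk'}) : forestBlocks G Fp = mergedBlocks Fr Tk Tk' := by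
  obtain ⟨Tl, hTl, hverts⟩ := hFp.1.exists_oldTree hFp.2
  have hpair : {Tk, Tk'} ⊆ Fr.trees := hFp.2 ▸ Set.sdiff_subset
  rw [forestBlocks, ForestPlan.trees_eq_insert_of_sdiff hFp.2 hTl, Set.image_insert_eq, hverts,
    Fr.verts_injOn.image_sdiff, Set.inter_eq_right.mpr hpair, Set.image_pair, mergedBlocks,
    Set.union_singleton, forestBlocks]

end Ancestors

section Weights

variable {G : SimpleGraph V} {r : ℕ} {Fr : ForestPlan G r} {Tk Tk' : G.Subgraph}

lemma finprod_forestBlocks_eq {M : Type*} [CommMonoid M] (f : Set V → M) (hk : Tk ∈ Fr.trees)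
    (hk' : Tk' ∈ Fr.trees) (hne : Tk ≠ Tk') :
    ∏ᶠ B ∈ forestBlocks G Fr, f B =
      (∏ᶠ B ∈ forestBlocks G Fr \ {Tk.verts, Tk'.verts}, f B) * (f Tk.verts * f Tk'.verts) := by
  have hpair : {Tk.verts, Tk'.verts} ⊆ forestBlocks G Fr :=
    Set.pair_subset ⟨Tk, hk, rfl⟩ ⟨Tk', hk', rfl⟩
  conv_lhs => rw [← Set.sdiff_union_of_subset hpair]
  rw [finprod_mem_union Set.disjoint_sdiff_left (Set.toFinite _) (Set.toFinite _),
    finprod_mem_pair fun h => hne (Fr.verts_injOn hk hk' h)]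

lemma finprod_mergedBlocks_eq {M : Type*} [CommMonoid M] (f : Set V → M) (hk : Tk ∈ Fr.trees)
    (hk' : Tk' ∈ Fr.trees) (hne : Tk ≠ Tk') :
    ∏ᶠ B ∈ mergedBlocks Fr Tk Tk', f B =
      (∏ᶠ B ∈ forestBlocks G Fr \ {Tk.verts, Tk'.verts}, f B) * f (Tk.verts ∪ Tk'.verts) := by
  have hm : Tk.verts ∪ Tk'.verts ∉ forestBlocks G Fr \ {Tk.verts, Tk'.verts} :=
    fun ⟨⟨T, hT, h⟩, _⟩ => Fr.verts_ne_union hk hk' hne hT h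
  rw [mergedBlocks, finprod_mem_union (Set.disjoint_singleton_right.mpr hm) (Set.toFinite _)
    (Set.toFinite _), finprod_mem_singleton]

lemma summand_eq_of_mem_ancestorsMerging {p : G.Subgraph → Sym2 V → ℝ}
    {φ : Set V → Set (Set V) → ℝ} {γ : Set (Set V) → ℝ} {γt M : ForestPlan G (r - 1) → ℝ}
    (hγt : ∀ Fp : ForestPlan G (r - 1),
      γt Fp = γ (forestBlocks G Fp) * ∏ᶠ T ∈ Fp.trees, ((tau G (ind G T.verts) : ℝ))⁻¹)
    (hM : ∀ Fp : ForestPlan G (r - 1), ForestAncestor G Fp Fr →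
      ∀ Tl ∈ Fp.trees \ Fr.trees,
        ∀ Tk ∈ Fr.trees \ Fp.trees, ∀ Tk' ∈ Fr.trees \ Fp.trees, Tk ≠ Tk' →
          M Fp = φ Tl.verts (forestBlocks G Fp) * EffB G p Tk Tk' /
            (tau G (ind G Tl.verts) : ℝ))
    (hne : Tk ≠ Tk') {Fp : ForestPlan G (r - 1)} (hFp : Fp ∈ ancestorsMerging Fr {Tk, Tk'}) :
    γt Fp * M Fp =
      γ (mergedBlocks Fr Tk Tk') * (∏ᶠ B ∈ mergedBlocks Fr Tk Tk', (tau G (ind G B) : ℝ))⁻¹ *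
        (φ (Tk.verts ∪ Tk'.verts) (mergedBlocks Fr Tk Tk') * EffB G p Tk Tk' /
          (tau G (ind G (Tk.verts ∪ Tk'.verts)) : ℝ)) := by
  obtain ⟨Tl, hTl, hverts⟩ := hFp.1.exists_oldTree hFp.2
  have hk : Tk ∈ Fr.trees \ Fp.trees := hFp.2 ▸ Set.mem_insert _ _
  have hk' : Tk' ∈ Fr.trees \ Fp.trees := hFp.2 ▸ Set.mem_insert_of_mem _ rfl
  rw [hγt, hM Fp hFp.1 Tl (hTl ▸ rfl) Tk hk Tk' hk' hne,
    Fp.finprod_trees_verts fun B => ((tau G (ind G B) : ℝ))⁻¹,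
    finprod_mem_inv_distrib _ (Set.toFinite _), forestBlocks_of_mem_ancestorsMerging hFp, hverts]

lemma tau_union_mul_summand_eq (W : Set (Set V) → ℝ) (hWr : 0 < W (forestBlocks G Fr)) (ρ : ℝ)
    {γ : Set (Set V) → ℝ} (hγ : ∀ P, γ P = W P * ∏ᶠ B ∈ P, (tau G (ind G B) : ℝ) ^ ρ)
    (hk : Tk ∈ Fr.trees) (hk' : Tk' ∈ Fr.trees) (hne : Tk ≠ Tk')
    (hcross : (crossEdges G Tk.verts Tk'.verts).Nonempty) (x y : ℝ) :
    (tau G (ind G (Tk.verts ∪ Tk'.verts)) : ℝ) *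
        (γ (mergedBlocks Fr Tk Tk') * (∏ᶠ B ∈ mergedBlocks Fr Tk Tk', (tau G (ind G B) : ℝ))⁻¹ *
          (x * y / (tau G (ind G (Tk.verts ∪ Tk'.verts)) : ℝ))) =
      γ (forestBlocks G Fr) *
        ((∏ᶠ B ∈ forestBlocks G Fr \ {Tk.verts, Tk'.verts}, (tau G (ind G B) : ℝ))⁻¹ *
          (W (mergedBlocks Fr Tk Tk') / W (forestBlocks G Fr)) *
          ((tau G (ind G (Tk.verts ∪ Tk'.verts)) : ℝ) ^ (ρ - 1) /
            ((tau G (ind G Tk.verts) : ℝ) ^ ρ * (tau G (ind G Tk'.verts) : ℝ) ^ ρ)) * x * y) := by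
  obtain ⟨_, he, u, v, rfl, hu, hv⟩ := hcross
  have hτ {H : G.Subgraph} (hH : H.Connected) : (0 : ℝ) < tau G H := Nat.cast_pos.mpr (tau_pos hH)
  have hm := hτ (connected_ind_union (Fr.connected hk) (Fr.connected hk') hu hv he)
  have hτk := Real.rpow_pos_of_pos (hτ ((Fr.connected hk).mono Subgraph.le_induce_top_verts rfl)) ρ
  have hτk' :=
    Real.rpow_pos_of_pos (hτ ((Fr.connected hk').mono Subgraph.le_induce_top_verts rfl)) ρ
  rw [hγ, hγ, finprod_forestBlocks_eq _ hk hk' hne, finprod_mergedBlocks_eq _ hk hk' hne,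
    finprod_mergedBlocks_eq _ hk hk' hne, Real.rpow_sub_one hm.ne']
  field_simp

end Weights

theorem stmt_19_general (G : SimpleGraph V) (r : ℕ) (hr : 1 < r) (Fr : ForestPlan G r)
    (W : Set (Set V) → ℝ) (hWr : 0 < W (forestBlocks G Fr))
    (ρ : ℝ)
    (p : G.Subgraph → Sym2 V → ℝ)
    (φ : Set V → Set (Set V) → ℝ)
    (γ : Set (Set V) → ℝ)
    (hγ : ∀ P : Set (Set V), γ P = W P * ∏ᶠ B ∈ P, (tau G (ind G B) : ℝ) ^ ρ)
    (γt : ForestPlan G (r - 1) → ℝ)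
    (hγt : ∀ Fp : ForestPlan G (r - 1),
      γt Fp = γ (forestBlocks G Fp) *
        ∏ᶠ T ∈ Fp.trees, ((tau G (ind G T.verts) : ℝ))⁻¹)
    (M : ForestPlan G (r - 1) → ℝ)
    (hM : ∀ Fp : ForestPlan G (r - 1), ForestAncestor G Fp Fr →
      ∀ Tl ∈ Fp.trees \ Fr.trees,
        ∀ Tk ∈ Fr.trees \ Fp.trees, ∀ Tk' ∈ Fr.trees \ Fp.trees, Tk ≠ Tk' →
          M Fp = φ Tl.verts (forestBlocks G Fp) * EffB G p Tk Tk' /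
            (tau G (ind G Tl.verts) : ℝ))
    (g : Set G.Subgraph → ℝ)
    (hg : ∀ Tk ∈ Fr.trees, ∀ Tk' ∈ Fr.trees, Tk ≠ Tk' →
      (crossEdges G Tk.verts Tk'.verts).Nonempty →
      g {Tk, Tk'} =
        (∏ᶠ B ∈ forestBlocks G Fr \ {Tk.verts, Tk'.verts}, (tau G (ind G B) : ℝ))⁻¹ *
          (W ((forestBlocks G Fr \ {Tk.verts, Tk'.verts}) ∪ {Tk.verts ∪ Tk'.verts}) /
            W (forestBlocks G Fr)) *
          ((tau G (ind G (Tk.verts ∪ Tk'.verts)) : ℝ) ^ (ρ - 1) /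
            ((tau G (ind G Tk.verts) : ℝ) ^ ρ * (tau G (ind G Tk'.verts) : ℝ) ^ ρ)) *
          φ (Tk.verts ∪ Tk'.verts)
            ((forestBlocks G Fr \ {Tk.verts, Tk'.verts}) ∪ {Tk.verts ∪ Tk'.verts}) *
          EffB G p Tk Tk') :
    ∑ᶠ Fp ∈ {Fp : ForestPlan G (r - 1) | ForestAncestor G Fp Fr}, γt Fp * M Fp =
      γ (forestBlocks G Fr) *
        ∑ᶠ P ∈ {P : Set G.Subgraph | ∃ Tk ∈ Fr.trees, ∃ Tk' ∈ Fr.trees,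
            Tk ≠ Tk' ∧ (crossEdges G Tk.verts Tk'.verts).Nonempty ∧ P = {Tk, Tk'}}, g P := by
  rw [setOf_forestAncestor_eq_biUnion (by omega) Fr,
    finsum_mem_biUnion (pairwiseDisjoint_ancestorsMerging Fr _) (Set.toFinite _)
      fun _ _ => Set.toFinite _, mul_finsum_mem]
  refine finsum_mem_congr rfl ?_
  rintro _ ⟨Tk, hk, Tk', hk', hne, hcross, rfl⟩
  rw [finsum_mem_congr rfl fun Fp hFp => summand_eq_of_mem_ancestorsMerging hγt hM hne hFp,
    finsum_mem_const (Set.toFinite _), ncard_ancestorsMerging Fr hk hk' hne, nsmul_eq_mul,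
    hg Tk hk Tk' hk' hne hcross]
  exact tau_union_mul_summand_eq W hWr ρ hγ hk hk' hne hcross _ _

/-- Forest-space marginal-proposal identity:
`Σ_{Fp ∈ A₁(Fr)} γ̃(Fp)·M(Fr|Fp) = γ(ξr) · Σ_{{T_k,T_{k'}} adjacent in Fr}
(∏_{other regions G_n} τ(G_n))⁻¹ · (W(ξ̃)/W(ξr)) ·
τ(G[V(T_k)∪V(T_{k'})])^{ρ-1}/(τ(G[V(T_k)])^ρ·τ(G[V(T_{k'})])^ρ) · φ(…|ξ̃) ·
EffB(T_k,T_{k'})`, where `γ̃`, `M`, and the unordered-pair summand `g` are pinned by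
`hγt`, `hM`, `hg` respectively. -/
theorem stmt_19 (G : SimpleGraph V) (r : ℕ) (hr : 1 < r) (Fr : ForestPlan G r)
    (W : Set (Set V) → ℝ) (hW : ∀ P, 0 ≤ W P) (hWr : 0 < W (forestBlocks G Fr))
    (ρ : ℝ)
    (p : G.Subgraph → Sym2 V → ℝ) (hp : ∀ T e, 0 ≤ p T e)
    (φ : Set V → Set (Set V) → ℝ)
    (γ : Set (Set V) → ℝ)
    (hγ : ∀ P : Set (Set V), γ P = W P * ∏ᶠ B ∈ P, (tau G (ind G B) : ℝ) ^ ρ)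
    (γt : ForestPlan G (r - 1) → ℝ)
    (hγt : ∀ Fp : ForestPlan G (r - 1),
      γt Fp = γ (forestBlocks G Fp) *
        ∏ᶠ T ∈ Fp.trees, ((tau G (ind G T.verts) : ℝ))⁻¹)
    (M : ForestPlan G (r - 1) → ℝ)
    (hM : ∀ Fp : ForestPlan G (r - 1), ForestAncestor G Fp Fr →
      ∀ Tl ∈ Fp.trees \ Fr.trees,
        ∀ Tk ∈ Fr.trees \ Fp.trees, ∀ Tk' ∈ Fr.trees \ Fp.trees, Tk ≠ Tk' →
          M Fp = φ Tl.verts (forestBlocks G Fp) * EffB G p Tk Tk' /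
            (tau G (ind G Tl.verts) : ℝ))
    (g : Set G.Subgraph → ℝ)
    (hg : ∀ Tk ∈ Fr.trees, ∀ Tk' ∈ Fr.trees, Tk ≠ Tk' →
      (crossEdges G Tk.verts Tk'.verts).Nonempty →
      g {Tk, Tk'} =
        (∏ᶠ B ∈ forestBlocks G Fr \ {Tk.verts, Tk'.verts}, (tau G (ind G B) : ℝ))⁻¹ *
          (W ((forestBlocks G Fr \ {Tk.verts, Tk'.verts}) ∪ {Tk.verts ∪ Tk'.verts}) /
            W (forestBlocks G Fr)) *
          ((tau G (ind G (Tk.verts ∪ Tk'.verts)) : ℝ) ^ (ρ - 1) /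
            ((tau G (ind G Tk.verts) : ℝ) ^ ρ * (tau G (ind G Tk'.verts) : ℝ) ^ ρ)) *
          φ (Tk.verts ∪ Tk'.verts)
            ((forestBlocks G Fr \ {Tk.verts, Tk'.verts}) ∪ {Tk.verts ∪ Tk'.verts}) *
          EffB G p Tk Tk') :
    ∑ᶠ Fp ∈ {Fp : ForestPlan G (r - 1) | ForestAncestor G Fp Fr}, γt Fp * M Fp =
      γ (forestBlocks G Fr) *
        ∑ᶠ P ∈ {P : Set G.Subgraph | ∃ Tk ∈ Fr.trees, ∃ Tk' ∈ Fr.trees,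
            Tk ≠ Tk' ∧ (crossEdges G Tk.verts Tk'.verts).Nonempty ∧ P = {Tk, Tk'}}, g P :=
  stmt_19_general G r hr Fr W hWr ρ p φ γ hγ γt hγt M hM g hg

end Redist
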